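/- Let t ↦ (x_t, y_t) be the unique solution of the ODE ż = B(z) on its maximal forward interval [0, 𝒯) with (x∘, y∘) ∈ S, suppose 𝒯 < ∞, and let x_- = min{x∘, x_∞} and ť = sup{ t < 𝒯 : x_t ≥ x_- /2 }. Then (x_t, y_t) ∈ L = (0, x_- /2) × (-∞, 0) for all t ∈ (ť, 𝒯), and consequently limsup_{t → 𝒯⁻} y_t ≤ 0. -/

import Mathlib

open Real Set Filter Topology

/-!
Along a solution the energy `y ^ 2 / 2 + α ∫_{x_∞}^{x} (V (ξ / d) - v∘) dξ` is nonincreasing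
and the potential term is nonnegative, so `y` stays bounded and `x` has a limit at `𝒯`. Were this
limit positive, `ẏ` would be bounded as well, the solution would converge to a point of `S`, and
Picard–Lindelöf would continue it past `𝒯`; hence `x_t → 0`. After `ť` we have
`x_t < x₋ / 2 < x_∞`, where `V (x / d) < v∘`, so `ẏ > 0` whenever `y = 0`: once `y ≥ 0` it stays
so, `x` is then nondecreasing and cannot tend to `0`. Hence `y_t < 0` on `(ť, 𝒯)`.
-/

/-- The optimal-velocity function `V(x) = tanh(x-2) - tanh(-2)`. -/
noncomputable def V (x : ℝ) : ℝ := Real.tanh (x - 2) - Real.tanh (-2)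

/-- Inverse hyperbolic tangent. -/
noncomputable def artanh (v : ℝ) : ℝ := (1 / 2) * Real.log ((1 + v) / (1 - v))

/-- The equilibrium following distance `x_∞ = d (2 + artanh(v∘ + tanh(-2)))`. -/
noncomputable def xInf (d v₀ : ℝ) : ℝ := d * (2 + _root_.artanh (v₀ + Real.tanh (-2)))

/-- `IsSol α β d v₀ x y T` says that `t ↦ (x t, y t)` solves the ODE `ż = B(z)` on the
forward time interval `[0, T)`, staying in the state space `S = (0,∞) × ℝ`. -/
def IsSol (α β d v₀ : ℝ) (x y : ℝ → ℝ) (T : EReal) : Prop :=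
  ∀ t : ℝ, 0 ≤ t → (t : EReal) < T →
    0 < x t ∧ HasDerivAt x (y t) t ∧
      HasDerivAt y (-α * (V (x t / d) - v₀ + y t) - β * y t / (x t) ^ 2) t

/-- `[0, T)` is the maximal forward interval of definition. -/
def IsMaximal (α β d v₀ : ℝ) (x y : ℝ → ℝ) (T : EReal) : Prop :=
  ∀ (T' : EReal) (x' y' : ℝ → ℝ), T < T' → IsSol α β d v₀ x' y' T' →
    x' 0 = x 0 → y' 0 = y 0 → False

theorem exists_tendsto_nhdsLT_of_abs_deriv_le {g g' : ℝ → ℝ} {a b C : ℝ} (hab : a < b)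
    (hg : ∀ t ∈ Ico a b, HasDerivAt g (g' t) t) (hC : ∀ t ∈ Ico a b, |g' t| ≤ C) :
    ∃ L, Tendsto g (𝓝[<] b) (𝓝 L) := by
  have hlip : LipschitzOnWith C.toNNReal g (Ico a b) :=
    (convex_Ico a b).lipschitzOnWith_of_nnnorm_hasDerivWithin_le
      (fun t ht => (hg t ht).hasDerivWithinAt) fun t ht => by
        rw [← NNReal.coe_le_coe, coe_nnnorm, Real.norm_eq_abs, Real.coe_toNNReal']
        exact le_max_of_le_left (hC t ht)
  obtain ⟨G, hG, hgG⟩ := hlip.extend_real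
  refine ⟨G b, ((hG.continuous.tendsto b).mono_left nhdsWithin_le_nhds).congr' ?_⟩
  filter_upwards [Ioo_mem_nhdsLT hab] with t ht
  exact (hgG (Ioo_subset_Ico_self ht)).symm

theorem sSup_superlevel_lt_of_tendsto {f : ℝ → ℝ} {T c L : ℝ} (hT : 0 < T)
    (hf : Tendsto f (𝓝[<] T) (𝓝 L)) (hLc : L < c) :
    sSup {t | 0 ≤ t ∧ t < T ∧ c ≤ f t} < T := by
  obtain ⟨l, hlT : l < T, hl⟩ := mem_nhdsLT_iff_exists_Ioo_subset.1 (hf.eventually_lt_const hLc)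
  refine (Real.sSup_le (fun t ht => le_max_of_le_left (le_of_not_gt fun hlt => ?_))
    (le_max_right l 0)).trans_lt (max_lt hlT hT)
  exact (hl ⟨hlt, ht.2.1⟩).not_ge ht.2.2

theorem continuousOn_update_Ioc_of_tendsto {X : Type*} [TopologicalSpace X] {z : ℝ → X}
    {a T : ℝ} {p : X} (hz : ContinuousOn z (Ioo a T)) (hlim : Tendsto z (𝓝[<] T) (𝓝 p)) :
    ContinuousOn (Function.update z T p) (Ioc a T) := by
  intro t ht
  rcases ht.2.lt_or_eq with htT | rfl
  · rw [continuousWithinAt_update_of_ne htT.ne]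
    exact (hz.continuousAt (Ioo_mem_nhds ht.1 htT)).continuousWithinAt
  · rw [continuousWithinAt_update_same]
    exact hlim.mono_left (nhdsWithin_mono _ fun s hs => lt_of_le_of_ne hs.1.2 hs.2)

section ODE

variable {E : Type*} [NormedAddCommGroup E] [NormedSpace ℝ E]

theorem hasDerivWithinAt_Iic_update_of_tendsto {f : E → E} {p : E} (hf : ContinuousAt f p)
    {z : ℝ → E} {a T t : ℝ} (hz : ∀ t ∈ Ioo a T, HasDerivAt z (f (z t)) t)
    (hlim : Tendsto z (𝓝[<] T) (𝓝 p)) (ht : t ∈ Ioc a T) :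
    HasDerivWithinAt (Function.update z T p) (f (Function.update z T p t)) (Iic t) t := by
  have hz' : ∀ s ∈ Ioo a T, HasDerivAt (Function.update z T p) (f (z s)) s := fun s hs =>
    (hz s hs).congr_of_eventuallyEq
      ((eventually_lt_nhds hs.2).mono fun r hr => Function.update_of_ne hr.ne _ _)
  rcases ht.2.lt_or_eq with htT | rfl
  · rw [Function.update_of_ne htT.ne]
    exact (hz' t ⟨ht.1, htT⟩).hasDerivWithinAt
  rw [Function.update_self]
  apply hasDerivWithinAt_Iic_of_tendsto_deriv (s := Ioo a t)
    (fun s hs => (hz' s hs).differentiableAt.differentiableWithinAt)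
    ((continuousOn_update_Ioc_of_tendsto (fun s hs => (hz s hs).continuousAt.continuousWithinAt)
      hlim t ht).mono Ioo_subset_Ioc_self) (Ioo_mem_nhdsLT ht.1)
  refine (hf.tendsto.comp hlim).congr' ?_
  filter_upwards [Ioo_mem_nhdsLT ht.1] with s hs
  exact (hz' s hs).deriv.symm

theorem eventuallyEq_nhdsLT_of_tendsto_of_hasDerivAt {f : E → E} {p : E}
    (hf : ContDiffAt ℝ 1 f p) {z γ : ℝ → E} {a T : ℝ} (haT : a < T)
    (hz : ∀ t ∈ Ioo a T, HasDerivAt z (f (z t)) t) (hlim : Tendsto z (𝓝[<] T) (𝓝 p))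
    (hγ : ∀ᶠ t in 𝓝 T, HasDerivAt γ (f (γ t)) t) (hγT : γ T = p) : z =ᶠ[𝓝[<] T] γ := by
  -- `z` patched by its limit solves the ODE on `(σ, T]` and meets `γ` at `T`.
  obtain ⟨K, s, hs, hK⟩ := hf.exists_lipschitzOnWith
  set zb := Function.update z T p
  have hzb_of_lt : ∀ t < T, zb t = z t := fun t ht => Function.update_of_ne ht.ne _ _
  have hzb_T : zb T = p := Function.update_self _ _ _
  have hγp : Tendsto γ (𝓝 T) (𝓝 p) := hγT ▸ hγ.self_of_nhds.continuousAt.tendsto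
  have hnear : ∀ᶠ t in 𝓝[<] T, a < t ∧ z t ∈ s ∧ γ t ∈ s ∧ HasDerivAt γ (f (γ t)) t := by
    filter_upwards [Ioo_mem_nhdsLT haT, hlim.eventually hs,
      nhdsWithin_le_nhds (hγp.eventually hs), nhdsWithin_le_nhds hγ] with t h1 h2 h3 h4
    exact ⟨h1.1, h2, h3, h4⟩
  obtain ⟨l, hlT : l < T, hl⟩ := mem_nhdsLT_iff_exists_Ioo_subset.1 hnear
  obtain ⟨σ, hlσ, hσT⟩ := exists_between hlT
  have hσ : ∀ t ∈ Icc σ T, t < T → a < t ∧ z t ∈ s ∧ γ t ∈ s ∧ HasDerivAt γ (f (γ t)) t :=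
    fun t ht htT => hl ⟨hlσ.trans_le ht.1, htT⟩
  have hsub : Icc σ T ⊆ Ioc a T := fun t ht => ⟨(hσ σ ⟨le_rfl, hσT.le⟩ hσT).1.trans_le ht.1, ht.2⟩
  have hγ' : ∀ t ∈ Icc σ T, HasDerivAt γ (f (γ t)) t := fun t ht => by
    rcases ht.2.lt_or_eq with htT | rfl
    exacts [(hσ t ht htT).2.2.2, hγ.self_of_nhds]
  have hmem : ∀ t ∈ Ioc σ T, zb t ∈ s ∧ γ t ∈ s := fun t ht => by
    rcases ht.2.lt_or_eq with htT | rfl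
    · obtain ⟨-, h2, h3, -⟩ := hσ t (Ioc_subset_Icc_self ht) htT
      exact ⟨hzb_of_lt t htT ▸ h2, h3⟩
    · exact ⟨hzb_T ▸ mem_of_mem_nhds hs, hγT ▸ mem_of_mem_nhds hs⟩
  have heq : EqOn zb γ (Icc σ T) :=
    ODE_solution_unique_of_mem_Icc_left (v := fun _ => f) (s := fun _ => s) (fun _ _ => hK)
      ((continuousOn_update_Ioc_of_tendsto
        (fun t ht => (hz t ht).continuousAt.continuousWithinAt) hlim).mono hsub)
      (fun t ht => hasDerivWithinAt_Iic_update_of_tendsto hf.continuousAt hz hlim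
        (hsub (Ioc_subset_Icc_self ht)))
      (fun t ht => (hmem t ht).1)
      (fun t ht => (hγ' t ht).continuousAt.continuousWithinAt)
      (fun t ht => (hγ' t (Ioc_subset_Icc_self ht)).hasDerivWithinAt)
      (fun t ht => (hmem t ht).2) (hzb_T.trans hγT.symm)
  filter_upwards [Ioo_mem_nhdsLT hσT] with t ht
  rw [← hzb_of_lt t ht.2]
  exact heq (Ioo_subset_Icc_self ht)

variable [CompleteSpace E]

theorem exists_hasDerivAt_extension_of_tendsto {f : E → E} {p : E} (hf : ContDiffAt ℝ 1 f p)
    {z : ℝ → E} {a T : ℝ} (haT : a < T) (hz : ∀ t ∈ Ico a T, HasDerivAt z (f (z t)) t)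
    (hlim : Tendsto z (𝓝[<] T) (𝓝 p)) :
    ∃ T' > T, ∃ w : ℝ → E, EqOn w z (Iio T) ∧ w T = p ∧
      ∀ t ∈ Ico a T', HasDerivAt w (f (w t)) t := by
  obtain ⟨γ, hγT, ε, hε, hγ⟩ :=
    hf.exists_forall_mem_closedBall_exists_eq_forall_mem_Ioo_hasDerivAt₀ T
  have hzγ := eventuallyEq_nhdsLT_of_tendsto_of_hasDerivAt hf haT
    (fun t ht => hz t (Ioo_subset_Ico_self ht)) hlim
    (eventually_of_mem (Ioo_mem_nhds (by linarith) (by linarith)) hγ) hγT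
  obtain ⟨σ, hσT : σ < T, hσ⟩ := mem_nhdsLT_iff_exists_Ioo_subset.1 hzγ
  set w : ℝ → E := fun t => if t < T then z t else γ t
  have hwγ : ∀ t, σ < t → w t = γ t := fun t hσt => by
    by_cases htT : t < T
    · simpa [w, htT] using hσ ⟨hσt, htT⟩
    · simp [w, htT]
  refine ⟨T + ε, by linarith, w, fun t ht => if_pos ht, by simp [w, hγT], ?_⟩
  rintro t ⟨hat, htT'⟩
  rcases lt_or_ge t T with htT | hTt
  · rw [show w t = z t from if_pos htT]
    exact (hz t ⟨hat, htT⟩).congr_of_eventuallyEq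
      ((eventually_lt_nhds htT).mono fun s hs => if_pos hs)
  · rw [hwγ t (hσT.trans_le hTt)]
    exact (hγ t ⟨by linarith, htT'⟩).congr_of_eventuallyEq
      ((eventually_gt_nhds (hσT.trans_le hTt)).mono hwγ)

end ODE

lemma contDiff_tanh {n : WithTop ℕ∞} : ContDiff ℝ n tanh := by
  rw [show tanh = fun x => sinh x / cosh x from funext tanh_eq_sinh_div_cosh]
  exact contDiff_sinh.div contDiff_cosh fun x => (cosh_pos x).ne'

lemma tanh_strictMono : StrictMono tanh := fun a b hab => by
  rwa [← Real.strictMonoOn_artanh.lt_iff_lt ⟨neg_one_lt_tanh a, tanh_lt_one a⟩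
    ⟨neg_one_lt_tanh b, tanh_lt_one b⟩, Real.artanh_tanh, Real.artanh_tanh]

@[fun_prop]
lemma contDiff_V {n : WithTop ℕ∞} : ContDiff ℝ n V :=
  (contDiff_tanh.comp (contDiff_id.sub contDiff_const)).sub contDiff_const

lemma strictMono_V : StrictMono V := fun _ _ h =>
  sub_lt_sub_right (tanh_strictMono (sub_lt_sub_right h 2)) _

lemma abs_V_le_two (u : ℝ) : |V u| ≤ 2 := by
  rw [abs_le, V]
  constructor <;> linarith [neg_one_lt_tanh (u - 2), tanh_lt_one (u - 2),
    neg_one_lt_tanh (-2), tanh_lt_one (-2)]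

section Equilibrium

variable {d v₀ : ℝ}

lemma add_tanh_neg_two_mem_Ioo (hv₀ : v₀ ∈ Ioo 0 (1 + tanh 2)) :
    v₀ + tanh (-2) ∈ Ioo (-1) 1 := by
  have := neg_one_lt_tanh (-2)
  rw [tanh_neg] at this ⊢
  constructor <;> linarith [hv₀.1, hv₀.2]

lemma V_xInf_div (hd : 0 < d) (hv₀ : v₀ ∈ Ioo 0 (1 + tanh 2)) : V (xInf d v₀ / d) = v₀ := by
  have hw := add_tanh_neg_two_mem_Ioo hv₀
  rw [xInf, mul_div_cancel_left₀ _ hd.ne', V, add_sub_cancel_left, _root_.artanh,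
    ← Real.artanh_eq_half_log (Ioo_subset_Icc_self hw), Real.tanh_artanh hw, add_sub_cancel_right]

lemma V_div_lt_iff (hd : 0 < d) (hv₀ : v₀ ∈ Ioo 0 (1 + tanh 2)) {ξ : ℝ} :
    V (ξ / d) < v₀ ↔ ξ < xInf d v₀ := by
  conv_lhs => rw [← V_xInf_div hd hv₀]
  rw [strictMono_V.lt_iff_lt, div_lt_div_iff_of_pos_right hd]

lemma V_div_le_iff (hd : 0 < d) (hv₀ : v₀ ∈ Ioo 0 (1 + tanh 2)) {ξ : ℝ} :
    v₀ ≤ V (ξ / d) ↔ xInf d v₀ ≤ ξ := by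
  simpa only [not_lt] using (V_div_lt_iff hd hv₀).not

lemma xInf_pos (hd : 0 < d) (hv₀ : v₀ ∈ Ioo 0 (1 + tanh 2)) : 0 < xInf d v₀ :=
  (V_div_lt_iff hd hv₀).1 (by simpa [V] using hv₀.1)

noncomputable def potential (d v₀ u : ℝ) : ℝ := ∫ ξ in xInf d v₀..u, (V (ξ / d) - v₀)

lemma hasDerivAt_potential (d v₀ u : ℝ) :
    HasDerivAt (potential d v₀) (V (u / d) - v₀) u :=
  (Continuous.integral_hasStrictDerivAt (by fun_prop) _ _).hasDerivAt

lemma potential_nonneg (hd : 0 < d) (hv₀ : v₀ ∈ Ioo 0 (1 + tanh 2)) (u : ℝ) :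
    0 ≤ potential d v₀ u := by
  rcases le_total (xInf d v₀) u with h | h
  · exact intervalIntegral.integral_nonneg h fun ξ hξ =>
      sub_nonneg.2 ((V_div_le_iff hd hv₀).2 hξ.1)
  · rw [potential, intervalIntegral.integral_symm, ← intervalIntegral.integral_neg]
    refine intervalIntegral.integral_nonneg h fun ξ hξ => neg_nonneg.2 (sub_nonpos.2 ?_)
    rcases hξ.2.lt_or_eq with hlt | rfl
    · exact ((V_div_lt_iff hd hv₀).2 hlt).le
    · exact (V_xInf_div hd hv₀).le

end Equilibrium

noncomputable def accel (α β d v₀ ξ η : ℝ) : ℝ := -α * (V (ξ / d) - v₀ + η) - β * η / ξ ^ 2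

noncomputable def fieldB (α β d v₀ : ℝ) (p : ℝ × ℝ) : ℝ × ℝ := (p.2, accel α β d v₀ p.1 p.2)

noncomputable def energy (α d v₀ ξ η : ℝ) : ℝ := η ^ 2 / 2 + α * potential d v₀ ξ

section Dynamics

variable {α β d v₀ : ℝ}

lemma contDiffAt_fieldB {p : ℝ × ℝ} (hp : p.1 ≠ 0) : ContDiffAt ℝ 1 (fieldB α β d v₀) p := by
  unfold fieldB accel
  fun_prop (disch := simpa)

lemma abs_accel_le {m c ξ η : ℝ} (hα : 0 ≤ α) (hβ : 0 ≤ β) (hm : 0 < m) (hξ : m ≤ ξ)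
    (hη : |η| ≤ c) : |accel α β d v₀ ξ η| ≤ α * (2 + |v₀| + c) + β * c / m ^ 2 := by
  have h₁ : |V (ξ / d) - v₀ + η| ≤ 2 + |v₀| + c :=
    calc |V (ξ / d) - v₀ + η| ≤ |V (ξ / d) - v₀| + |η| := abs_add_le _ _
      _ ≤ |V (ξ / d)| + |v₀| + |η| := by gcongr; exact abs_sub _ _
      _ ≤ 2 + |v₀| + c := by gcongr; exact abs_V_le_two _
  have h₂ : |β * η / ξ ^ 2| ≤ β * c / m ^ 2 := by
    have hξ₀ : 0 < ξ := hm.trans_le hξ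
    rw [abs_div, abs_mul, abs_of_nonneg hβ, abs_of_pos (pow_pos hξ₀ 2)]
    exact div_le_div₀ (mul_nonneg hβ ((abs_nonneg η).trans hη))
      (mul_le_mul_of_nonneg_left hη hβ) (pow_pos hm 2) (pow_le_pow_left₀ hm.le hξ 2)
  calc |accel α β d v₀ ξ η| ≤ |-α * (V (ξ / d) - v₀ + η)| + |β * η / ξ ^ 2| := abs_sub _ _
    _ = α * |V (ξ / d) - v₀ + η| + |β * η / ξ ^ 2| := by rw [abs_mul, abs_neg, abs_of_nonneg hα]
    _ ≤ _ := by gcongr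

variable {x y : ℝ → ℝ} {T t : ℝ}

lemma IsSol.pos (hsol : IsSol α β d v₀ x y T) (ht : t ∈ Ico 0 T) : 0 < x t :=
  (hsol t ht.1 (EReal.coe_lt_coe_iff.2 ht.2)).1

lemma IsSol.hasDerivAt_x (hsol : IsSol α β d v₀ x y T) (ht : t ∈ Ico 0 T) :
    HasDerivAt x (y t) t :=
  (hsol t ht.1 (EReal.coe_lt_coe_iff.2 ht.2)).2.1

lemma IsSol.hasDerivAt_y (hsol : IsSol α β d v₀ x y T) (ht : t ∈ Ico 0 T) :
    HasDerivAt y (accel α β d v₀ (x t) (y t)) t :=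
  (hsol t ht.1 (EReal.coe_lt_coe_iff.2 ht.2)).2.2

lemma IsSol.hasDerivAt_energy (hsol : IsSol α β d v₀ x y T) (ht : t ∈ Ico 0 T) :
    HasDerivAt (fun s => energy α d v₀ (x s) (y s)) (-(α + β / x t ^ 2) * y t ^ 2) t := by
  have h := ((hsol.hasDerivAt_y ht).pow 2).div_const 2 |>.add
    (((hasDerivAt_potential d v₀ (x t)).comp t (hsol.hasDerivAt_x ht)).const_mul α)
  exact h.congr_deriv (by unfold accel; ring)

lemma IsSol.energy_antitoneOn (hα : 0 ≤ α) (hβ : 0 ≤ β) (hsol : IsSol α β d v₀ x y T) :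
    AntitoneOn (fun s => energy α d v₀ (x s) (y s)) (Ico 0 T) := by
  have hE := fun t (ht : t ∈ Ico 0 T) => hsol.hasDerivAt_energy ht
  refine antitoneOn_of_hasDerivWithinAt_nonpos (convex_Ico 0 T)
    (fun t ht => (hE t ht).continuousAt.continuousWithinAt)
    (fun t ht => (hE t (interior_subset ht)).hasDerivWithinAt) fun t _ => ?_
  have : 0 ≤ α + β / x t ^ 2 := by positivity
  nlinarith [sq_nonneg (y t)]

lemma IsSol.abs_y_le (hα : 0 ≤ α) (hβ : 0 ≤ β) (hd : 0 < d) (hv₀ : v₀ ∈ Ioo 0 (1 + tanh 2))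
    (hsol : IsSol α β d v₀ x y T) (ht : t ∈ Ico 0 T) :
    |y t| ≤ √(2 * energy α d v₀ (x 0) (y 0)) := by
  apply Real.abs_le_sqrt
  have hE := hsol.energy_antitoneOn hα hβ ⟨le_rfl, ht.1.trans_lt ht.2⟩ ht ht.1
  have hW := mul_nonneg hα (potential_nonneg hd hv₀ (x t))
  simp only [energy] at hE ⊢
  linarith

lemma IsSol.exists_tendsto_x (hα : 0 ≤ α) (hβ : 0 ≤ β) (hd : 0 < d)
    (hv₀ : v₀ ∈ Ioo 0 (1 + tanh 2)) (hT : 0 < T) (hsol : IsSol α β d v₀ x y T) :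
    ∃ X, Tendsto x (𝓝[<] T) (𝓝 X) :=
  exists_tendsto_nhdsLT_of_abs_deriv_le hT (fun _ ht => hsol.hasDerivAt_x ht)
    fun _ ht => hsol.abs_y_le hα hβ hd hv₀ ht

lemma IsSol.exists_tendsto_y (hα : 0 ≤ α) (hβ : 0 ≤ β) (hd : 0 < d)
    (hv₀ : v₀ ∈ Ioo 0 (1 + tanh 2)) (hT : 0 < T) (hsol : IsSol α β d v₀ x y T) {X : ℝ}
    (hX : Tendsto x (𝓝[<] T) (𝓝 X)) (hX0 : 0 < X) : ∃ Y, Tendsto y (𝓝[<] T) (𝓝 Y) := by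
  obtain ⟨l, hlT : l < T, hl⟩ :=
    mem_nhdsLT_iff_exists_Ioo_subset.1 (hX.eventually_const_lt (half_lt_self hX0))
  obtain ⟨a, hla, haT⟩ := exists_between (max_lt hlT hT)
  have ha : ∀ t ∈ Ico a T, t ∈ Ico 0 T ∧ X / 2 < x t := fun t ht =>
    ⟨⟨(le_max_right _ _).trans (hla.le.trans ht.1), ht.2⟩,
      hl ⟨(le_max_left _ _).trans_lt (hla.trans_le ht.1), ht.2⟩⟩
  exact exists_tendsto_nhdsLT_of_abs_deriv_le haT (fun t ht => hsol.hasDerivAt_y (ha t ht).1)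
    fun t ht => abs_accel_le hα hβ (half_pos hX0) (ha t ht).2.le
      (hsol.abs_y_le hα hβ hd hv₀ (ha t ht).1)

lemma IsSol.exists_extension (hsol : IsSol α β d v₀ x y T) (hT : 0 < T) {X Y : ℝ}
    (hX : Tendsto x (𝓝[<] T) (𝓝 X)) (hX0 : 0 < X) (hY : Tendsto y (𝓝[<] T) (𝓝 Y)) :
    ∃ T' > T, ∃ x' y' : ℝ → ℝ, IsSol α β d v₀ x' y' T' ∧ x' 0 = x 0 ∧ y' 0 = y 0 := by
  obtain ⟨T₁, hT₁, w, hwz, hwT, hw⟩ :=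
    exists_hasDerivAt_extension_of_tendsto (contDiffAt_fieldB (p := (X, Y)) hX0.ne') hT
      (z := fun t => (x t, y t))
      (fun t ht => (hsol.hasDerivAt_x ht).prodMk (hsol.hasDerivAt_y ht)) (hX.prodMk_nhds hY)
  have hpos : ∀ᶠ t in 𝓝 T, 0 < (w t).1 := by
    refine (continuous_fst.continuousAt.tendsto.comp
      (hw T ⟨hT.le, hT₁⟩).continuousAt.tendsto).eventually_const_lt ?_
    simpa [hwT] using hX0
  obtain ⟨u, huT : T < u, hu⟩ := mem_nhdsGE_iff_exists_Ico_subset.1 (nhdsWithin_le_nhds hpos)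
  refine ⟨min T₁ u, lt_min hT₁ huT, fun t => (w t).1, fun t => (w t).2,
    fun t ht0 htT => ?_, by simp [hwz hT], by simp [hwz hT]⟩
  have htT : t < min T₁ u := EReal.coe_lt_coe_iff.1 htT
  have hwt := hw t ⟨ht0, htT.trans_le (min_le_left _ _)⟩
  refine ⟨?_, by exact hasFDerivAt_fst.comp_hasDerivAt t hwt,
    by exact hasFDerivAt_snd.comp_hasDerivAt t hwt⟩
  rcases lt_or_ge t T with htT' | hTt
  · simpa [hwz htT'] using hsol.pos ⟨ht0, htT'⟩
  · exact hu ⟨hTt, htT.trans_le (min_le_right _ _)⟩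

lemma IsMaximal.tendsto_x_zero (hα : 0 ≤ α) (hβ : 0 ≤ β) (hd : 0 < d)
    (hv₀ : v₀ ∈ Ioo 0 (1 + tanh 2)) (hT : 0 < T) (hsol : IsSol α β d v₀ x y T)
    (hmax : IsMaximal α β d v₀ x y T) : Tendsto x (𝓝[<] T) (𝓝 0) := by
  obtain ⟨X, hX⟩ := hsol.exists_tendsto_x hα hβ hd hv₀ hT
  have hX0 : 0 ≤ X := ge_of_tendsto hX <| by
    filter_upwards [Ioo_mem_nhdsLT hT] with t ht using (hsol.pos (Ioo_subset_Ico_self ht)).le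
  obtain rfl | hXpos := hX0.eq_or_lt
  · exact hX
  obtain ⟨Y, hY⟩ := hsol.exists_tendsto_y hα hβ hd hv₀ hT hX hXpos
  obtain ⟨T', hTT', x', y', hsol', hx', hy'⟩ := hsol.exists_extension hT hX hXpos hY
  exact (hmax T' x' y' (EReal.coe_lt_coe_iff.2 hTT') hsol' hx' hy').elim

lemma IsSol.y_nonneg_of_x_lt_xInf (hα : 0 < α) (hd : 0 < d) (hv₀ : v₀ ∈ Ioo 0 (1 + tanh 2))
    (hsol : IsSol α β d v₀ x y T) {a b : ℝ} (ha : 0 ≤ a) (hbT : b < T)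
    (hx : ∀ s ∈ Icc a b, x s < xInf d v₀) (hya : 0 ≤ y a) (ht : t ∈ Icc a b) : 0 ≤ y t := by
  have hab : ∀ s ∈ Icc a b, s ∈ Ico 0 T := fun s hs => ⟨ha.trans hs.1, hs.2.trans_lt hbT⟩
  refine neg_nonpos.1 <| image_le_of_deriv_right_lt_deriv_boundary' (f := fun s => -y s)
    (B := fun _ => 0) (B' := fun _ => 0)
    (fun s hs => (hsol.hasDerivAt_y (hab s hs)).neg.continuousAt.continuousWithinAt)
    (fun s hs => (hsol.hasDerivAt_y (hab s (Ico_subset_Icc_self hs))).neg.hasDerivWithinAt)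
    (neg_nonpos.2 hya) continuousOn_const (fun _ _ => hasDerivWithinAt_const _ _ _)
    (fun s hs hys => ?_) ht
  -- where `y` vanishes below the equilibrium distance, `ẏ = α (v₀ - V(x / d)) > 0`
  have hV := (V_div_lt_iff hd hv₀).2 (hx s (Ico_subset_Icc_self hs))
  simp only [accel, neg_eq_zero.1 hys, add_zero, mul_zero, zero_div, sub_zero]
  nlinarith [mul_pos hα (sub_pos.2 hV)]

lemma IsSol.y_neg_of_tendsto_x_zero (hα : 0 < α) (hd : 0 < d) (hv₀ : v₀ ∈ Ioo 0 (1 + tanh 2))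
    (hsol : IsSol α β d v₀ x y T) (hx0 : Tendsto x (𝓝[<] T) (𝓝 0)) (ht : t ∈ Ico 0 T)
    (hx : ∀ s ∈ Ico t T, x s < xInf d v₀) : y t < 0 := by
  by_contra! hyt
  have hsub : ∀ s ∈ Ico t T, s ∈ Ico 0 T := fun s hs => ⟨ht.1.trans hs.1, hs.2⟩
  have hy : ∀ s ∈ Ico t T, 0 ≤ y s := fun s hs =>
    hsol.y_nonneg_of_x_lt_xInf hα hd hv₀ ht.1 hs.2
      (fun r hr => hx r ⟨hr.1, hr.2.trans_lt hs.2⟩) hyt ⟨hs.1, le_rfl⟩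
  have hmono : MonotoneOn x (Ico t T) := monotoneOn_of_hasDerivWithinAt_nonneg (convex_Ico t T)
    (fun s hs => (hsol.hasDerivAt_x (hsub s hs)).continuousAt.continuousWithinAt)
    (fun s hs => (hsol.hasDerivAt_x (hsub s (interior_subset hs))).hasDerivWithinAt)
    fun s hs => hy s (interior_subset hs)
  have : x t ≤ 0 := ge_of_tendsto hx0 <| by
    filter_upwards [Ioo_mem_nhdsLT ht.2] with s hs
    exact hmono ⟨le_rfl, ht.2⟩ (Ioo_subset_Ico_self hs) hs.1.le
  exact (hsol.pos ht).not_ge this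

end Dynamics

theorem solution_in_lower_region_general (α β d v₀ : ℝ)
    (hα : 0 < α) (hβ : 0 < β) (hd : 0 < d)
    (hv₀ : v₀ ∈ Set.Ioo 0 (1 + Real.tanh 2))
    (x y : ℝ → ℝ) (T : ℝ) (hT : 0 < T)
    (x₀ : ℝ) (hx₀ : 0 < x₀)
    (hsol : IsSol α β d v₀ x y (T : EReal))
    (hmax : IsMaximal α β d v₀ x y (T : EReal))
    (xm : ℝ) (hxm : xm = min x₀ (xInf d v₀))
    (tc : ℝ) (htc : tc = sSup {t : ℝ | 0 ≤ t ∧ t < T ∧ xm / 2 ≤ x t}) :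
    (∀ t : ℝ, tc < t → t < T → 0 < x t ∧ x t < xm / 2 ∧ y t < 0) ∧
    Filter.limsup y (nhdsWithin T (Set.Iio T)) ≤ 0 := by
  have hx0 := hmax.tendsto_x_zero hα.le hβ.le hd hv₀ hT hsol
  have hxm₀ : 0 < xm := hxm ▸ lt_min hx₀ (xInf_pos hd hv₀)
  have hxmInf : xm ≤ xInf d v₀ := hxm ▸ min_le_right _ _
  have htc₀ : 0 ≤ tc := htc ▸ Real.sSup_nonneg fun t ht => ht.1
  have htcT : tc < T := htc ▸ sSup_superlevel_lt_of_tendsto hT hx0 (half_pos hxm₀)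
  have hlow : ∀ t, tc < t → t < T → x t < xm / 2 := fun t htct htT => by
    by_contra! h
    exact notMem_of_csSup_lt (htc ▸ htct) (s := {t | 0 ≤ t ∧ t < T ∧ xm / 2 ≤ x t})
      ⟨T, fun s hs => hs.2.1.le⟩ ⟨htc₀.trans htct.le, htT, h⟩
  have hregion : ∀ t, tc < t → t < T → 0 < x t ∧ x t < xm / 2 ∧ y t < 0 := fun t htct htT =>
    ⟨hsol.pos ⟨htc₀.trans htct.le, htT⟩, hlow t htct htT,
      hsol.y_neg_of_tendsto_x_zero hα hd hv₀ hx0 ⟨htc₀.trans htct.le, htT⟩ fun s hs => by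
        linarith [hlow s (htct.trans_le hs.1) hs.2]⟩
  refine ⟨hregion, limsup_le_of_le ?_ ?_⟩
  · refine isCoboundedUnder_le_of_eventually_le _ (x := -√(2 * energy α d v₀ (x 0) (y 0))) ?_
    filter_upwards [Ioo_mem_nhdsLT hT] with t ht
    exact neg_le_of_abs_le (hsol.abs_y_le hα.le hβ.le hd hv₀ (Ioo_subset_Ico_self ht))
  · filter_upwards [Ioo_mem_nhdsLT htcT] with t ht
    exact (hregion t ht.1 ht.2).2.2.le

/-- with `𝒯 < ∞`, `x₋ = min{x∘, x_∞}` and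
`ť = sup{ t < 𝒯 : x_t ≥ x₋ / 2 }`, the solution lies in `L = (0, x₋ / 2) × (-∞, 0)` for all
`t ∈ (ť, 𝒯)`, and consequently `limsup_{t → 𝒯⁻} y_t ≤ 0`. -/
theorem solution_in_lower_region (α β d v₀ : ℝ)
    (hα : 0 < α) (hβ : 0 < β) (hd : 0 < d)
    (hv₀ : v₀ ∈ Set.Ioo 0 (1 + Real.tanh 2))
    (x y : ℝ → ℝ) (T : ℝ) (hT : 0 < T)
    (x₀ y₀ : ℝ) (hx₀ : 0 < x₀) (hinit : x 0 = x₀ ∧ y 0 = y₀)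
    (hsol : IsSol α β d v₀ x y (T : EReal))
    (hmax : IsMaximal α β d v₀ x y (T : EReal))
    (xm : ℝ) (hxm : xm = min x₀ (xInf d v₀))
    (tc : ℝ) (htc : tc = sSup {t : ℝ | 0 ≤ t ∧ t < T ∧ xm / 2 ≤ x t}) :
    (∀ t : ℝ, tc < t → t < T → 0 < x t ∧ x t < xm / 2 ∧ y t < 0) ∧
    Filter.limsup y (nhdsWithin T (Set.Iio T)) ≤ 0 :=
  solution_in_lower_region_general α β d v₀ hα hβ hd hv₀ x y T hT x₀ hx₀ hsol hmax xm hxm tc htc
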